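/- arXiv:2501.05291 — 6 statements merged into one kernel-verified Lean document; each statement's English description precedes it below -/
import Mathlib

section
/- If G is a claw-free graph (no induced K_{1,3}), then the independence number of G is at most twice its domination number: α(G) ≤ 2γ(G). -/
open Finset

variable {V : Type*}

/-- A finset is independent in `G` : no two of its vertices are adjacent. -/
def IsIndepFinset (G : SimpleGraph V) (S : Finset V) : Prop :=
  ∀ u ∈ S, ∀ v ∈ S, ¬ G.Adj u v

/-- A finset dominates `G` : every vertex outside it has a neighbour inside it. -/
def IsDomFinset (G : SimpleGraph V) (D : Finset V) : Prop :=
  ∀ v, v ∉ D → ∃ u ∈ D, G.Adj u v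

/-- The independence number of `G`. -/
noncomputable def indepNum [Fintype V] (G : SimpleGraph V) : ℕ :=
  sSup {n | ∃ S : Finset V, IsIndepFinset G S ∧ S.card = n}

/-- The domination number of `G`. -/
noncomputable def domNum [Fintype V] (G : SimpleGraph V) : ℕ :=
  sInf {n | ∃ D : Finset V, IsDomFinset G D ∧ D.card = n}

/-- `G` is `K_{1,r}`-free: no vertex has `r` pairwise nonadjacent neighbours. -/
def K1rFree (G : SimpleGraph V) (r : ℕ) : Prop :=
  ¬ ∃ (v : V) (A : Finset V), (∀ a ∈ A, G.Adj v a) ∧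
      (∀ a ∈ A, ∀ b ∈ A, a ≠ b → ¬ G.Adj a b) ∧ A.card = r

/-!
Fix a minimum dominating set `D` and an independent set `S`. Every vertex of `S` lies in the
closed neighbourhood of some `d ∈ D`. If `d ∈ S`, independence leaves `d` as the only vertex of
`S` there; otherwise the vertices of `S` adjacent to `d` are pairwise nonadjacent, so there are
at most two of them, or `d` would be the centre of a claw. Hence `|S| ≤ 2 |D|`.
-/

section

variable {G : SimpleGraph V}

theorem IsIndepFinset.mono {S T : Finset V} (hT : IsIndepFinset G T) (hST : S ⊆ T) :
    IsIndepFinset G S :=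
  fun u hu v hv => hT u (hST hu) v (hST hv)

theorem K1rFree.card_lt {r : ℕ} (hG : K1rFree G r) {v : V} {A : Finset V}
    (hadj : ∀ a ∈ A, G.Adj v a) (hA : IsIndepFinset G A) : A.card < r := by
  by_contra! h
  obtain ⟨B, hBA, hB⟩ := exists_subset_card_eq h
  exact hG ⟨v, B, fun a ha => hadj a (hBA ha),
    fun a ha b hb _ => hA a (hBA ha) b (hBA hb), hB⟩

theorem IsIndepFinset.card_filter_closedNbhd_le [DecidableEq V] [DecidableRel G.Adj] {r : ℕ}
    (hr : 1 ≤ r) (hG : K1rFree G (r + 1)) {S : Finset V} (hS : IsIndepFinset G S) (d : V) :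
    (S.filter fun s => s = d ∨ G.Adj d s).card ≤ r := by
  by_cases hd : d ∈ S
  · have hsub : (S.filter fun s => s = d ∨ G.Adj d s) ⊆ {d} := by
      intro s hs
      obtain ⟨hsS, rfl | hds⟩ := mem_filter.mp hs
      · exact mem_singleton_self s
      · exact absurd hds (hS d hd s hsS)
    exact (card_le_card hsub).trans (card_singleton d ▸ hr)
  · have hadj : ∀ s ∈ S.filter (fun s => s = d ∨ G.Adj d s), G.Adj d s := by
      intro s hs
      obtain ⟨hsS, rfl | hds⟩ := mem_filter.mp hs
      · exact absurd hsS hd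
      · exact hds
    exact Nat.lt_succ_iff.mp (hG.card_lt hadj (hS.mono (filter_subset _ _)))

theorem IsIndepFinset.card_le_mul_card_of_isDomFinset {r : ℕ} (hr : 1 ≤ r)
    (hG : K1rFree G (r + 1)) {S D : Finset V} (hS : IsIndepFinset G S) (hD : IsDomFinset G D) :
    S.card ≤ r * D.card := by
  classical
  have hcover : S ⊆ D.biUnion fun d => S.filter fun s => s = d ∨ G.Adj d s := by
    intro s hs
    by_cases hsD : s ∈ D
    · exact mem_biUnion.mpr ⟨s, hsD, mem_filter.mpr ⟨hs, Or.inl rfl⟩⟩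
    · obtain ⟨d, hdD, hds⟩ := hD s hsD
      exact mem_biUnion.mpr ⟨d, hdD, mem_filter.mpr ⟨hs, Or.inr hds⟩⟩
  calc S.card
      ≤ (D.biUnion fun d => S.filter fun s => s = d ∨ G.Adj d s).card := card_le_card hcover
    _ ≤ ∑ d ∈ D, (S.filter fun s => s = d ∨ G.Adj d s).card := card_biUnion_le
    _ ≤ ∑ _d ∈ D, r := sum_le_sum fun d _ => hS.card_filter_closedNbhd_le hr hG d
    _ = r * D.card := by rw [sum_const, smul_eq_mul, mul_comm]

theorem exists_isDomFinset_card_eq_domNum [Fintype V] (G : SimpleGraph V) :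
    ∃ D : Finset V, IsDomFinset G D ∧ D.card = domNum G :=
  Nat.sInf_mem (s := {n | ∃ D : Finset V, IsDomFinset G D ∧ D.card = n})
    ⟨_, univ, fun v hv => absurd (mem_univ v) hv, rfl⟩

theorem indepNum_le_mul_domNum [Fintype V] {r : ℕ} (hr : 1 ≤ r) (hG : K1rFree G (r + 1)) :
    indepNum G ≤ r * domNum G := by
  obtain ⟨D, hD, hDcard⟩ := exists_isDomFinset_card_eq_domNum G
  refine csSup_le ⟨0, ∅, fun u hu => absurd hu (notMem_empty u), rfl⟩ ?_
  rintro n ⟨S, hS, rfl⟩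
  exact hDcard ▸ hS.card_le_mul_card_of_isDomFinset hr hG hD

end

/-- Claw-free graphs satisfy α(G) ≤ 2γ(G). -/
theorem stmt0 [Fintype V] (G : SimpleGraph V) (hG : K1rFree G 3) :
    indepNum G ≤ 2 * domNum G :=
  indepNum_le_mul_domNum one_le_two hG
end

section
/- If G is a claw-free graph of order n with minimum degree δ, then α(G) ≤ 2n/(δ+2). -/
/-!
Count the edges between a maximum independent set `S` and its complement. Each vertex of `S`
has all of its at least `δ` neighbours outside `S`, while a vertex outside `S` has at most two
neighbours in `S`, since three would be pairwise nonadjacent and form a claw. Hence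
`δ·|S| ≤ 2·(n - |S|)`. The same count for `K_{1,r+1}`-free graphs gives `(δ + r)·α(G) ≤ r·n`.
-/

open Finset

variable {V : Type*}

theorem exists_isIndepFinset_card_eq_indepNum [Fintype V] (G : SimpleGraph V) :
    ∃ S : Finset V, IsIndepFinset G S ∧ #S = indepNum G := by
  have hne : {n | ∃ S : Finset V, IsIndepFinset G S ∧ #S = n}.Nonempty :=
    ⟨0, ∅, by simp [IsIndepFinset], rfl⟩
  have hbdd : BddAbove {n | ∃ S : Finset V, IsIndepFinset G S ∧ #S = n} :=
    ⟨Fintype.card V, by rintro n ⟨S, -, rfl⟩; exact S.card_le_univ⟩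
  exact Nat.sSup_mem hne hbdd

namespace IsIndepFinset

variable {G : SimpleGraph V} [DecidableRel G.Adj] {S : Finset V}

theorem minDegree_le_card_bipartiteAbove_compl [Fintype V] [DecidableEq V]
    (hS : IsIndepFinset G S) {v : V} (hv : v ∈ S) :
    G.minDegree ≤ #(Sᶜ.bipartiteAbove G.Adj v) := by
  have hnbr : G.neighborFinset v ⊆ Sᶜ.bipartiteAbove G.Adj v := fun u hu => by
    rw [SimpleGraph.mem_neighborFinset] at hu
    exact mem_filter.mpr ⟨mem_compl.mpr fun huS => hS v hv u huS hu, hu⟩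
  calc G.minDegree ≤ G.degree v := G.minDegree_le_degree v
    _ = #(G.neighborFinset v) := (G.card_neighborFinset_eq_degree v).symm
    _ ≤ _ := card_le_card hnbr

theorem card_bipartiteBelow_lt_of_k1rFree {r : ℕ} (hG : K1rFree G r) (hS : IsIndepFinset G S)
    (u : V) : #(S.bipartiteBelow G.Adj u) < r := by
  by_contra! h
  obtain ⟨A, hA, hAr⟩ := exists_subset_card_eq h
  refine hG ⟨u, A, fun a ha => (mem_filter.mp (hA ha)).2.symm, fun a ha b hb _ => ?_, hAr⟩
  exact hS a (mem_filter.mp (hA ha)).1 b (mem_filter.mp (hA hb)).1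

end IsIndepFinset

theorem minDegree_add_mul_indepNum_le_of_k1rFree [Fintype V] (G : SimpleGraph V)
    [DecidableRel G.Adj] {r : ℕ} (hG : K1rFree G (r + 1)) :
    (G.minDegree + r) * indepNum G ≤ r * Fintype.card V := by
  classical
  obtain ⟨S, hS, hScard⟩ := exists_isIndepFinset_card_eq_indepNum G
  have hcount : #S * G.minDegree ≤ #Sᶜ * r :=
    card_mul_le_card_mul G.Adj (fun _ hv => hS.minDegree_le_card_bipartiteAbove_compl hv)
      fun u _ => Nat.le_of_lt_succ (hS.card_bipartiteBelow_lt_of_k1rFree hG u)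
  rw [card_compl] at hcount
  have hle : #S ≤ Fintype.card V := S.card_le_univ
  rw [← hScard, add_mul, Nat.mul_comm G.minDegree]
  calc #S * G.minDegree + r * #S ≤ (Fintype.card V - #S) * r + r * #S := by gcongr
    _ = r * Fintype.card V := by
      rw [Nat.mul_comm, ← Nat.mul_add, Nat.sub_add_cancel hle]

theorem stmt5_general [Fintype V] (G : SimpleGraph V) [DecidableRel G.Adj]
    (hG : K1rFree G 3) :
    (G.minDegree + 2) * indepNum G ≤ 2 * Fintype.card V :=
  minDegree_add_mul_indepNum_le_of_k1rFree G hG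

/-- In a claw-free graph of order n and minimum degree δ, α(G) ≤ 2n/(δ+2),
i.e. (δ+2)·α(G) ≤ 2n. -/
theorem stmt5 [Fintype V] [Nonempty V] (G : SimpleGraph V) [DecidableRel G.Adj]
    (hG : K1rFree G 3) :
    (G.minDegree + 2) * indepNum G ≤ 2 * Fintype.card V :=
  stmt5_general G hG
end

section
/- If every vertex of a graph G of order n belongs to a triangle, then γ(G) ≤ n/3. -/
open Finset

variable {V : Type*}

/-!
Induction on the order. It suffices to find a vertex `c` and a set `S ⊆ N[c]` of at least three
vertices whose deletion leaves every other vertex in a triangle: then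
`c` together with a dominating set of `G - S` dominates `G`, and `|S| ≥ 3` pays for `c`.

Such a star is obtained by closing a set `C ⊆ N[c]` under dependence, where `v ∉ C` depends on
`C` if every triangle through `v` meets `C`; the closure is safe to delete, and it is a star
whenever all dependent vertices are adjacent to `c`. If no vertex had a safe star, applying
this to `C = {c}`, to edges and to triangles would show that each vertex `x` of a triangle `xyz`
has exactly one dependent vertex `α`, and that `α` is not adjacent to `y`; but `α` lies in a
triangle `xαt`, and applied to that triangle this contradicts `α ~ t`.
-/

namespace SimpleGraph

variable (G : SimpleGraph V)

def InTriangle (v : V) : Prop :=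
  ∃ a b, G.Adj v a ∧ G.Adj v b ∧ G.Adj a b

def InTriangleAvoiding (C : Set V) (v : V) : Prop :=
  ∃ a b, G.Adj v a ∧ G.Adj v b ∧ G.Adj a b ∧ a ∉ C ∧ b ∉ C

def IsDependent (C : Set V) (v : V) : Prop :=
  v ∉ C ∧ ¬ G.InTriangleAvoiding C v

def depClosure (C : Set V) : Set V :=
  C ∪ {v | G.IsDependent C v}

def IsSafeStar (c : V) (S : Set V) : Prop :=
  2 < S.ncard ∧ S ⊆ insert c (G.neighborSet c) ∧ ∀ v ∉ S, G.InTriangleAvoiding S v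

variable {G}

theorem inTriangleAvoiding_depClosure {C : Set V} {v : V} (hv : v ∉ G.depClosure C) :
    G.InTriangleAvoiding (G.depClosure C) v := by
  have hvC : v ∉ C := fun h => hv (Or.inl h)
  have hv' : G.InTriangleAvoiding C v := by
    by_contra h
    exact hv (Or.inr ⟨hvC, h⟩)
  obtain ⟨a, b, hva, hvb, hab, haC, hbC⟩ := hv'
  refine ⟨a, b, hva, hvb, hab, ?_, ?_⟩
  · rintro (ha | ⟨-, ha⟩)
    exacts [haC ha, ha ⟨v, b, hva.symm, hab, hvb, hvC, hbC⟩]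
  · rintro (hb | ⟨-, hb⟩)
    exacts [hbC hb, hb ⟨v, a, hvb.symm, hab.symm, hva, hvC, haC⟩]

theorem isSafeStar_depClosure {c : V} {C : Set V} (hC : C ⊆ insert c (G.neighborSet c))
    (hdep : ∀ v, G.IsDependent C v → G.Adj c v)
    (hcard : 2 < (G.depClosure C).ncard) : G.IsSafeStar c (G.depClosure C) := by
  refine ⟨hcard, ?_, fun v hv => inTriangleAvoiding_depClosure hv⟩
  rintro v (hv | hv)
  exacts [hC hv, Or.inr (hdep v hv)]

theorem IsDependent.of_insert {C : Set V} {p v : V} (hv : G.IsDependent (insert p C) v)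
    (hvp : ¬ G.Adj v p) : G.IsDependent C v := by
  refine ⟨fun h => hv.1 (Or.inr h), ?_⟩
  rintro ⟨a, b, hva, hvb, hab, haC, hbC⟩
  refine hv.2 ⟨a, b, hva, hvb, hab, ?_, ?_⟩
  · rintro (rfl | ha)
    exacts [hvp hva, haC ha]
  · rintro (rfl | hb)
    exacts [hvp hvb, hbC hb]

theorem IsDependent.exists_triangle_singleton {c v : V} (hv : G.IsDependent {c} v)
    (htri : G.InTriangle v) : ∃ t, G.Adj v c ∧ G.Adj v t ∧ G.Adj c t := by
  obtain ⟨a, b, hva, hvb, hab⟩ := htri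
  by_cases ha : a = c
  · exact ⟨b, ha ▸ hva, hvb, ha ▸ hab⟩
  by_cases hb : b = c
  · exact ⟨a, hb ▸ hvb, hva, hb ▸ hab.symm⟩
  exact absurd ⟨a, b, hva, hvb, hab, ha, hb⟩ hv.2

section NoSafeStar

variable [Finite V]

theorem IsDependent.eq_of_not_isSafeStar (htri : ∀ v, G.InTriangle v) {c v w : V}
    (hc : ∀ S, ¬ G.IsSafeStar c S) (hv : G.IsDependent {c} v) (hw : G.IsDependent {c} w) :
    v = w := by
  by_contra hvw
  have hdep (u : V) (hu : G.IsDependent {c} u) : G.Adj c u := by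
    obtain ⟨-, hcu, -⟩ := hu.exists_triangle_singleton (htri u)
    exact hcu.symm
  refine hc _ (isSafeStar_depClosure (by simp) hdep ?_)
  exact (Set.two_lt_ncard_iff (Set.toFinite _)).2 ⟨c, v, w, Or.inl rfl, Or.inr hv, Or.inr hw,
    fun h => hv.1 h.symm, fun h => hw.1 h.symm, hvw⟩

theorem exists_isDependent_singleton_not_adj {p q v : V} (hp : ∀ S, ¬ G.IsSafeStar p S)
    (hpq : G.Adj p q) (hv : G.IsDependent {p, q} v) :
    ∃ w, G.IsDependent {q} w ∧ ¬ G.Adj w p := by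
  by_contra h
  push Not at h
  have hdep (w : V) (hw : G.IsDependent {p, q} w) : G.Adj p w := by
    by_contra hpw
    exact hpw (h w (hw.of_insert fun hwp => hpw hwp.symm)).symm
  refine hp _ (isSafeStar_depClosure ?_ hdep ?_)
  · rintro w (rfl | rfl)
    exacts [Set.mem_insert _ _, Or.inr hpq]
  · refine (Set.two_lt_ncard_iff (Set.toFinite _)).2 ⟨p, q, v, Or.inl (Set.mem_insert p {q}),
      Or.inl (Set.mem_insert_of_mem p rfl), Or.inr hv, hpq.ne, ?_, ?_⟩
    · exact fun h => hv.1 (h ▸ Set.mem_insert p {q})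
    · exact fun h => hv.1 (h ▸ Set.mem_insert_of_mem p rfl)

theorem exists_isDependent_pair {x y z : V} (hx : ∀ S, ¬ G.IsSafeStar x S)
    (hxy : G.Adj x y) (hxz : G.Adj x z) (hyz : G.Adj y z) :
    ∃ v, G.IsDependent {y, z} v := by
  by_contra h
  push Not at h
  have hdep (w : V) (hw : G.IsDependent {x, y, z} w) : G.Adj x w := by
    by_contra hxw
    exact h w (hw.of_insert fun hwx => hxw hwx.symm)
  refine hx _ (isSafeStar_depClosure ?_ hdep ?_)
  · rintro w (rfl | rfl | rfl)
    exacts [Set.mem_insert _ _, Or.inr hxy, Or.inr hxz]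
  · exact (Set.two_lt_ncard_iff (Set.toFinite _)).2 ⟨x, y, z, Or.inl (by simp), Or.inl (by simp),
      Or.inl (by simp), hxy.ne, hxz.ne, hyz.ne⟩

theorem exists_isDependent_singleton_not_adj_of_triangle {x y z : V}
    (hy : ∀ S, ¬ G.IsSafeStar y S) (hz : ∀ S, ¬ G.IsSafeStar z S)
    (hxy : G.Adj x y) (hxz : G.Adj x z) (hyz : G.Adj y z) :
    ∃ w, G.IsDependent {x} w ∧ ¬ G.Adj w y := by
  obtain ⟨v, hv⟩ := exists_isDependent_pair hz hxz.symm hyz.symm hxy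
  rw [Set.pair_comm] at hv
  exact exists_isDependent_singleton_not_adj hy hxy.symm hv

theorem exists_isSafeStar [Nonempty V] (htri : ∀ v, G.InTriangle v) :
    ∃ c S, G.IsSafeStar c S := by
  by_contra h
  push Not at h
  obtain ⟨x⟩ := ‹Nonempty V›
  obtain ⟨y, z, hxy, hxz, hyz⟩ := htri x
  obtain ⟨α, hα, -⟩ := exists_isDependent_singleton_not_adj_of_triangle (h y) (h z) hxy hxz hyz
  obtain ⟨t, hαx, hαt, hxt⟩ := hα.exists_triangle_singleton (htri α)
  obtain ⟨γ, hγ, hγt⟩ :=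
    exists_isDependent_singleton_not_adj_of_triangle (h t) (h α) hxt hαx.symm hαt.symm
  obtain rfl := hα.eq_of_not_isSafeStar htri (h x) hγ
  exact hγt hαt

end NoSafeStar

theorem isDomFinset_insert_map_subtype [DecidableEq V] {c : V} {S : Set V}
    (hS : S ⊆ insert c (G.neighborSet c)) {D : Finset ↥Sᶜ} (hD : IsDomFinset (G.induce Sᶜ) D) :
    IsDomFinset G (insert c (D.map (Function.Embedding.subtype _))) := by
  intro v hv
  by_cases hvS : v ∈ S
  · rcases hS hvS with rfl | hcv
    · exact absurd (Finset.mem_insert_self v _) hv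
    · exact ⟨c, Finset.mem_insert_self c _, hcv⟩
  · have hv' : (⟨v, hvS⟩ : ↥Sᶜ) ∉ D := fun h =>
      hv (Finset.mem_insert_of_mem (Finset.mem_map_of_mem _ h))
    obtain ⟨u, hu, huv⟩ := hD _ hv'
    exact ⟨u, Finset.mem_insert_of_mem (Finset.mem_map_of_mem _ hu), huv⟩

theorem inTriangle_induce_compl {S : Set V} (hS : ∀ v ∉ S, G.InTriangleAvoiding S v)
    (v : ↥Sᶜ) : (G.induce Sᶜ).InTriangle v := by
  obtain ⟨a, b, hva, hvb, hab, haS, hbS⟩ := hS v v.2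
  exact ⟨⟨a, haS⟩, ⟨b, hbS⟩, hva, hvb, hab⟩

theorem exists_isDomFinset_three_mul_card_le [Finite V] (htri : ∀ v, G.InTriangle v) :
    ∃ D : Finset V, IsDomFinset G D ∧ 3 * #D ≤ Nat.card V := by
  classical
  induction hn : Nat.card V using Nat.strong_induction_on generalizing V with
  | _ n ih =>
  cases isEmpty_or_nonempty V
  · exact ⟨∅, fun v => isEmptyElim v, by simp⟩
  obtain ⟨c, S, hS3, hSc, hSsafe⟩ := exists_isSafeStar htri
  have hcard : S.ncard + Sᶜ.ncard = n := hn ▸ Set.ncard_add_ncard_compl S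
  obtain ⟨D, hD, hDcard⟩ :=
    ih Sᶜ.ncard (by omega) (G := G.induce Sᶜ) (inTriangle_induce_compl hSsafe) rfl
  refine ⟨_, isDomFinset_insert_map_subtype hSc hD, ?_⟩
  have := Finset.card_insert_le c (D.map (Function.Embedding.subtype _))
  rw [Finset.card_map] at this
  omega

end SimpleGraph

/-- If every vertex of G belongs to a triangle, then γ(G) ≤ n/3,
i.e. 3·γ(G) ≤ n. -/
theorem stmt11 [Fintype V] (G : SimpleGraph V)
    (htri : ∀ v : V, ∃ a b : V, G.Adj v a ∧ G.Adj v b ∧ G.Adj a b) :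
    3 * domNum G ≤ Fintype.card V := by
  obtain ⟨D, hD, hcard⟩ := G.exists_isDomFinset_three_mul_card_le htri
  have hdom : domNum G ≤ #D := Nat.sInf_le ⟨D, hD, rfl⟩
  rw [Nat.card_eq_fintype_card] at hcard
  omega
end

section
/- If G is a claw-free graph and k ∈ {1,2,3}, then for every triangle-free induced subgraph H of G we have k·|V(H)| ≤ 5·γ_k(G). -/
open Finset

variable {V : Type*}

/-- The k-domination number of G. -/
noncomputable def kDomNum [Fintype V] (G : SimpleGraph V) [DecidableRel G.Adj] (k : ℕ) : ℕ :=
  sInf {n | ∃ D : Finset V,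
    (∀ v, v ∉ D → k ≤ (D.filter (fun u => G.Adj u v)).card) ∧ D.card = n}

lemma claw_aux [DecidableEq V] {G : SimpleGraph V} (hG : K1rFree G 3) {d a b c : V}
    (ha : G.Adj d a) (hb : G.Adj d b) (hc : G.Adj d c)
    (hab : a ≠ b) (hac : a ≠ c) (hbc : b ≠ c)
    (nab : ¬ G.Adj a b) (nac : ¬ G.Adj a c) (nbc : ¬ G.Adj b c) : False := by
  apply hG
  refine ⟨d, {a, b, c}, ?_, ?_, ?_⟩
  · intro x hx
    simp only [Finset.mem_insert, Finset.mem_singleton] at hx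
    rcases hx with rfl | rfl | rfl <;> assumption
  · intro x hx y hy hxy
    simp only [Finset.mem_insert, Finset.mem_singleton] at hx hy
    rcases hx with rfl | rfl | rfl <;> rcases hy with rfl | rfl | rfl <;>
      first
        | exact absurd rfl hxy
        | assumption
        | (intro h; exact nab h.symm)
        | (intro h; exact nac h.symm)
        | (intro h; exact nbc h.symm)
  · rw [Finset.card_insert_of_notMem (by simp [hab, hac]),
      Finset.card_insert_of_notMem (by simp [hbc]), Finset.card_singleton]

lemma bound5 [DecidableEq V] {G : SimpleGraph V} [DecidableRel G.Adj] (hG : K1rFree G 3)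
    {X : Finset V}
    (hX : ∀ a ∈ X, ∀ b ∈ X, ∀ c ∈ X, G.Adj a b → G.Adj b c → ¬ G.Adj a c)
    (d : V) : (X.filter (fun u => G.Adj d u)).card ≤ 5 := by
  by_contra h
  push_neg at h
  set Y := X.filter (fun u => G.Adj d u) with hYdef
  have hYmem : ∀ u ∈ Y, u ∈ X ∧ G.Adj d u := by
    intro u hu; simpa [hYdef] using hu
  obtain ⟨v, hv⟩ : Y.Nonempty := Finset.card_pos.mp (by omega)
  have hvX := (hYmem v hv).1
  have hvd := (hYmem v hv).2
  set Y' := Y.erase v with hY'def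
  have hY'card : 5 ≤ Y'.card := by
    have h2 : Y'.card = Y.card - 1 := by rw [hY'def]; exact Finset.card_erase_of_mem hv
    omega
  have hY'mem : ∀ u ∈ Y', u ∈ X ∧ G.Adj d u ∧ u ≠ v := by
    intro u hu
    have h1 := Finset.mem_of_mem_erase hu
    exact ⟨(hYmem u h1).1, (hYmem u h1).2, Finset.ne_of_mem_erase hu⟩
  have hNM := Finset.card_filter_add_card_filter_not
    (s := Y') (p := fun u => G.Adj v u)
  rcases le_or_gt 3 ((Y'.filter (fun u => G.Adj v u)).card) with hN | hN
  · obtain ⟨T, hTsub, hT3⟩ := Finset.exists_subset_card_eq hN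
    obtain ⟨a, b, c, hab, hac, hbc, hTeq⟩ := Finset.card_eq_three.mp hT3
    rw [hTeq] at hTsub
    have hmem : ∀ x ∈ ({a, b, c} : Finset V), x ∈ X ∧ G.Adj d x ∧ G.Adj v x := by
      intro x hx
      have := hTsub hx
      have h1 := Finset.mem_of_mem_filter x this
      have h2 := (Finset.mem_filter.mp this).2
      exact ⟨(hY'mem x h1).1, (hY'mem x h1).2.1, h2⟩
    obtain ⟨haX, had, hav⟩ := hmem a (by simp)
    obtain ⟨hbX, hbd, hbv⟩ := hmem b (by simp)
    obtain ⟨hcX, hcd, hcv⟩ := hmem c (by simp)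
    exact claw_aux hG had hbd hcd hab hac hbc
      (hX a haX v hvX b hbX hav.symm hbv)
      (hX a haX v hvX c hcX hav.symm hcv)
      (hX b hbX v hvX c hcX hbv.symm hcv)
  · have hM : 3 ≤ (Y'.filter (fun u => ¬ G.Adj v u)).card := by omega
    obtain ⟨T, hTsub, hT3⟩ := Finset.exists_subset_card_eq hM
    obtain ⟨a, b, c, hab, hac, hbc, hTeq⟩ := Finset.card_eq_three.mp hT3
    rw [hTeq] at hTsub
    have hmem : ∀ x ∈ ({a, b, c} : Finset V),
        x ∈ X ∧ G.Adj d x ∧ ¬ G.Adj v x ∧ x ≠ v := by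
      intro x hx
      have := hTsub hx
      have h1 := Finset.mem_of_mem_filter x this
      have h2 := (Finset.mem_filter.mp this).2
      exact ⟨(hY'mem x h1).1, (hY'mem x h1).2.1, h2, (hY'mem x h1).2.2⟩
    obtain ⟨haX, had, hav, hane⟩ := hmem a (by simp)
    obtain ⟨hbX, hbd, hbv, hbne⟩ := hmem b (by simp)
    obtain ⟨hcX, hcd, hcv, hcne⟩ := hmem c (by simp)
    by_cases h1 : G.Adj a b
    · by_cases h2 : G.Adj b c
      · exact claw_aux hG hvd had hcd (Ne.symm hane) (Ne.symm hcne) hac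
          hav hcv (hX a haX b hbX c hcX h1 h2)
      · exact claw_aux hG hvd hbd hcd (Ne.symm hbne) (Ne.symm hcne) hbc
          hbv hcv h2
    · exact claw_aux hG hvd had hbd (Ne.symm hane) (Ne.symm hbne) hab
        hav hbv h1

lemma bound2 [DecidableEq V] {G : SimpleGraph V} [DecidableRel G.Adj] (hG : K1rFree G 3)
    {X : Finset V}
    (hX : ∀ a ∈ X, ∀ b ∈ X, ∀ c ∈ X, G.Adj a b → G.Adj b c → ¬ G.Adj a c)
    {d : V} (hd : d ∈ X) : (X.filter (fun u => G.Adj d u)).card ≤ 2 := by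
  by_contra h
  push_neg at h
  obtain ⟨T, hTsub, hT3⟩ := Finset.exists_subset_card_eq (show 3 ≤ _ from h)
  obtain ⟨a, b, c, hab, hac, hbc, hTeq⟩ := Finset.card_eq_three.mp hT3
  rw [hTeq] at hTsub
  have hmem : ∀ x ∈ ({a, b, c} : Finset V), x ∈ X ∧ G.Adj d x := by
    intro x hx
    have := hTsub hx
    exact ⟨Finset.mem_of_mem_filter x this, (Finset.mem_filter.mp this).2⟩
  obtain ⟨haX, had⟩ := hmem a (by simp)
  obtain ⟨hbX, hbd⟩ := hmem b (by simp)
  obtain ⟨hcX, hcd⟩ := hmem c (by simp)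
  exact claw_aux hG had hbd hcd hab hac hbc
    (hX a haX d hd b hbX had.symm hbd)
    (hX a haX d hd c hcX had.symm hcd)
    (hX b hbX d hd c hcX hbd.symm hcd)

/-- For k ∈ {1,2,3}, in a claw-free graph every triangle-free induced
subgraph H satisfies k·|V(H)| ≤ 5·γ_k(G). -/
theorem stmt12 [Fintype V] (G : SimpleGraph V) [DecidableRel G.Adj]
    (hG : K1rFree G 3) (k : ℕ) (hk : k ∈ ({1, 2, 3} : Set ℕ))
    (X : Finset V)
    (hX : ∀ a ∈ X, ∀ b ∈ X, ∀ c ∈ X, G.Adj a b → G.Adj b c → ¬ G.Adj a c) :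
    k * X.card ≤ 5 * kDomNum G k := by
  classical
  have hk3 : k ≤ 3 := by
    simp only [Set.mem_insert_iff, Set.mem_singleton_iff] at hk
    rcases hk with rfl | rfl | rfl <;> norm_num
  have hmem : kDomNum G k ∈ {n | ∃ D : Finset V,
      (∀ v, v ∉ D → k ≤ (D.filter (fun u => G.Adj u v)).card) ∧ D.card = n} :=
    Nat.sInf_mem ⟨Finset.univ.card, Finset.univ,
      fun v hv => absurd (Finset.mem_univ v) hv, rfl⟩
  obtain ⟨D, hDdom, hDcard⟩ := hmem
  -- double counting
  have h1 : (X \ D).card * k ≤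
      ∑ v ∈ X \ D, (D.filter (fun u => G.Adj u v)).card := by
    have := Finset.card_nsmul_le_sum (X \ D)
      (fun v => (D.filter (fun u => G.Adj u v)).card) k
      (fun v hv => hDdom v (Finset.mem_sdiff.mp hv).2)
    simpa using this
  have hswap : ∑ v ∈ X \ D, (D.filter (fun u => G.Adj u v)).card =
      ∑ d ∈ D, ((X \ D).filter (fun v => G.Adj d v)).card := by
    simp_rw [Finset.card_filter]
    exact Finset.sum_comm
  set A := D.filter (fun d => d ∈ X) with hA
  set B := D.filter (fun d => d ∉ X) with hB
  have hsplit : ∑ d ∈ D, ((X \ D).filter (fun v => G.Adj d v)).card =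
      (∑ d ∈ A, ((X \ D).filter (fun v => G.Adj d v)).card) +
      (∑ d ∈ B, ((X \ D).filter (fun v => G.Adj d v)).card) :=
    (Finset.sum_filter_add_sum_filter_not D _ _).symm
  have hbA : ∀ d ∈ A, ((X \ D).filter (fun v => G.Adj d v)).card ≤ 2 := by
    intro d hd
    have hdX : d ∈ X := (Finset.mem_filter.mp hd).2
    calc ((X \ D).filter (fun v => G.Adj d v)).card
        ≤ (X.filter (fun v => G.Adj d v)).card :=
          Finset.card_le_card (Finset.filter_subset_filter _ (Finset.sdiff_subset))
      _ ≤ 2 := bound2 hG hX hdX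
  have hbB : ∀ d ∈ B, ((X \ D).filter (fun v => G.Adj d v)).card ≤ 5 := by
    intro d _
    calc ((X \ D).filter (fun v => G.Adj d v)).card
        ≤ (X.filter (fun v => G.Adj d v)).card :=
          Finset.card_le_card (Finset.filter_subset_filter _ (Finset.sdiff_subset))
      _ ≤ 5 := bound5 hG hX d
  have hsA : ∑ d ∈ A, ((X \ D).filter (fun v => G.Adj d v)).card ≤ A.card * 2 := by
    simpa using Finset.sum_le_card_nsmul A _ 2 hbA
  have hsB : ∑ d ∈ B, ((X \ D).filter (fun v => G.Adj d v)).card ≤ B.card * 5 := by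
    simpa using Finset.sum_le_card_nsmul B _ 5 hbB
  have hABcard : A.card + B.card = D.card :=
    Finset.card_filter_add_card_filter_not (p := fun d => d ∈ X)
  have hXsplit : (X \ D).card + (X ∩ D).card = X.card :=
    Finset.card_sdiff_add_card_inter X D
  have hXD : (X ∩ D).card = A.card := by
    rw [hA, Finset.filter_mem_eq_inter, Finset.inter_comm]
  have hmul : k * X.card = k * (X \ D).card + k * (X ∩ D).card := by
    rw [← hXsplit, Nat.mul_add]
  have hXDle : k * (X ∩ D).card ≤ 3 * A.card := by
    rw [hXD]; exact Nat.mul_le_mul_right _ hk3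
  have hmain : k * (X \ D).card ≤ A.card * 2 + B.card * 5 := by
    calc k * (X \ D).card = (X \ D).card * k := Nat.mul_comm _ _
      _ ≤ _ := h1
      _ = _ := by rw [hswap, hsplit]
      _ ≤ A.card * 2 + B.card * 5 := Nat.add_le_add hsA hsB
  rw [hmul, ← hDcard]
  omega
end

section
/- In a K_{1,r}-free graph G (r ≥ 3), if v is a vertex and S is a k-independent set (inducing a subgraph of maximum degree at most k) with v ∉ S, then v has at most (r-1)(k+1) neighbors in S. -/
open Finset

variable {V : Type*}

/-! The neighbours of `v` in `S` again form a `k`-independent set. A `k`-independent set with more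
than `n (k + 1)` vertices contains `n + 1` pairwise nonadjacent ones (pick a vertex, discard its
at most `k + 1` closed neighbours, repeat), so more than `(r - 1)(k + 1)` neighbours of `v` in `S`
would give `r` pairwise nonadjacent neighbours of `v`. -/

namespace SimpleGraph

def IsKIndependent (G : SimpleGraph V) [DecidableRel G.Adj] (k : ℕ) (S : Finset V) : Prop :=
  ∀ u ∈ S, #{w ∈ S | G.Adj u w} ≤ k

variable {G : SimpleGraph V} [DecidableRel G.Adj] {k : ℕ}

theorem IsKIndependent.mono {S T : Finset V} (hS : G.IsKIndependent k S) (hTS : T ⊆ S) :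
    G.IsKIndependent k T :=
  fun u hu => (card_le_card (filter_subset_filter _ hTS)).trans (hS u (hTS hu))

theorem IsKIndependent.exists_isNIndepSet [DecidableEq V] {n : ℕ} {T : Finset V}
    (hT : G.IsKIndependent k T) (hn : n * (k + 1) < #T) :
    ∃ A ⊆ T, G.IsNIndepSet (n + 1) A := by
  induction n generalizing T with
  | zero =>
    obtain ⟨u, hu⟩ : T.Nonempty := card_pos.mp (by omega)
    exact ⟨{u}, singleton_subset_iff.mpr hu, (isNClique_compl G).mp (isNClique_singleton.mpr rfl)⟩
  | succ n ih =>
    obtain ⟨u, hu⟩ : T.Nonempty := card_pos.mp (by omega)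
    set B := insert u {w ∈ T | G.Adj u w}
    have hB : #B ≤ k + 1 := (card_insert_le _ _).trans (Nat.succ_le_succ (hT u hu))
    have hTB : n * (k + 1) < #(T \ B) := by
      have := card_le_card_sdiff_add_card (s := T) (t := B)
      linarith
    obtain ⟨A, hAT, hA⟩ := ih (hT.mono sdiff_subset) hTB
    have hu_nonadj : ∀ b ∈ A, Gᶜ.Adj u b := by
      intro b hb
      have hb' := mem_sdiff.mp (hAT hb)
      simp only [B, mem_insert, mem_filter, not_or, not_and] at hb'
      exact (compl_adj G u b).mpr ⟨Ne.symm hb'.2.1, hb'.2.2 hb'.1⟩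
    refine ⟨insert u A, insert_subset hu (hAT.trans sdiff_subset), ?_⟩
    exact (isNClique_compl G).mp (((isNClique_compl G).mpr hA).insert hu_nonadj)

end SimpleGraph

theorem stmt18_general (G : SimpleGraph V) [DecidableRel G.Adj]
    (k r : ℕ) (hG : K1rFree G r) (S : Finset V)
    (hS : ∀ u ∈ S, (S.filter (fun w => G.Adj u w)).card ≤ k)
    (v : V) :
    (S.filter (fun u => G.Adj v u)).card ≤ (r - 1) * (k + 1) := by
  classical
  have hN : G.IsKIndependent k (S.filter (G.Adj v)) :=
    SimpleGraph.IsKIndependent.mono hS (filter_subset _ _)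
  by_contra! hcard
  cases r with
  | zero => exact hG ⟨v, ∅, by simp, by simp, rfl⟩
  | succ r =>
    obtain ⟨A, hAN, hA⟩ := hN.exists_isNIndepSet hcard
    exact hG ⟨v, A, fun a ha => (mem_filter.mp (hAN ha)).2, fun a ha b hb => hA.isIndepSet ha hb,
      hA.card_eq⟩

/-- In a K_{1,r}-free graph (r ≥ 3), a vertex outside a k-independent set S
has at most (r-1)(k+1) neighbours in S. -/
theorem stmt18 [Fintype V] (G : SimpleGraph V) [DecidableRel G.Adj]
    (k r : ℕ) (hr : 3 ≤ r) (hG : K1rFree G r) (S : Finset V)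
    (hS : ∀ u ∈ S, (S.filter (fun w => G.Adj u w)).card ≤ k)
    (v : V) (hv : v ∉ S) :
    (S.filter (fun u => G.Adj v u)).card ≤ (r - 1) * (k + 1) :=
  stmt18_general G k r hG S hS v
end

section
/- The graph G = (r-1)K_k + K_1 (the join of a single vertex with r-1 disjoint copies of K_k), for r ≥ 3 and k ≥ 1, is K_{1,r}-free, has domination number 1, and contains an induced k-colorable subgraph of order (r-1)k; hence the bound α_F(G) ≤ (r-1)k·γ(G) (F the family of graphs with chromatic number at most k) is attained with equality. -/
open Finset

variable {V : Type*}

/-- The graph (r-1)K_k + K_1 : one apex vertex (none) joined to r-1 disjoint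
copies of K_k. -/
def joinStarClique (r k : ℕ) : SimpleGraph (Option (Fin (r - 1) × Fin k)) where
  Adj x y := x ≠ y ∧ (x = none ∨ y = none ∨ Option.map Prod.fst x = Option.map Prod.fst y)
  symm := by
    constructor
    rintro x y ⟨hne, h⟩
    exact ⟨hne.symm, by tauto⟩
  loopless := by constructor; rintro x ⟨hne, -⟩; exact hne rfl

/-- The maximum order of an induced subgraph of G with chromatic number at
most k. -/
noncomputable def alphaChrom [Fintype V] (G : SimpleGraph V) (k : ℕ) : ℕ :=
  sSup {n | ∃ X : Finset V, (G.induce (X : Set V)).Colorable k ∧ X.card = n}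

/-! The apex dominates every vertex, so `γ(G) = 1`. Pairwise nonadjacent neighbours of the apex
lie in distinct copies of `K_k`, so there are at most `r - 1` of them, and the neighbourhood of
any other vertex is a clique. The apex together with one copy of `K_k` is a `(k+1)`-clique, so no
`k`-colourable induced subgraph contains all `(r - 1) k + 1` vertices, while the graph left after
deleting the apex is coloured by the position of a vertex inside its copy of `K_k`. -/

open SimpleGraph

section
variable [Fintype V] (G : SimpleGraph V)

theorem domNum_eq_one_of_forall_adj (v : V) (hv : ∀ w, w ≠ v → G.Adj v w) : domNum G = 1 := by
  have hsingleton : IsDomFinset G {v} := fun w hw =>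
    ⟨v, mem_singleton_self v, hv w (by simpa using hw)⟩
  refine le_antisymm (Nat.sInf_le ⟨{v}, hsingleton, card_singleton v⟩) ?_
  refine le_csInf ⟨1, {v}, hsingleton, card_singleton v⟩ ?_
  rintro _ ⟨D, hD, rfl⟩
  rw [Nat.one_le_iff_ne_zero, Ne, card_eq_zero]
  rintro rfl
  simpa using hD v (notMem_empty v)

theorem card_lt_of_colorable_induce {k : ℕ} (hG : ¬ G.Colorable k) {X : Finset V}
    (hX : (G.induce (X : Set V)).Colorable k) : X.card < Fintype.card V := by
  rw [card_lt_iff_ne_univ]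
  rintro rfl
  rw [coe_univ] at hX
  exact hG (hX.of_hom (induceUnivIso G).symm.toHom)

theorem alphaChrom_eq_card_sub_one [DecidableEq V] {k : ℕ} (hG : ¬ G.Colorable k) (v : V)
    (hv : (G.induce ((univ.erase v : Finset V) : Set V)).Colorable k) :
    alphaChrom G k = Fintype.card V - 1 := by
  refine IsGreatest.csSup_eq
    ⟨⟨univ.erase v, hv, by rw [card_erase_of_mem (mem_univ v), card_univ]⟩, ?_⟩
  rintro _ ⟨X, hX, rfl⟩
  exact Nat.le_sub_one_of_lt (card_lt_of_colorable_induce G hG hX)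

end

namespace joinStarClique

variable {r k : ℕ}

@[simp]
theorem adj_none_left {x : Option (Fin (r - 1) × Fin k)} :
    (joinStarClique r k).Adj none x ↔ x ≠ none :=
  ⟨fun h => h.ne.symm, fun h => ⟨h.symm, Or.inl rfl⟩⟩

@[simp]
theorem adj_none_right {x : Option (Fin (r - 1) × Fin k)} :
    (joinStarClique r k).Adj x none ↔ x ≠ none := by
  rw [adj_comm, adj_none_left]

@[simp]
theorem adj_some_some {p q : Fin (r - 1) × Fin k} :
    (joinStarClique r k).Adj (some p) (some q) ↔ p ≠ q ∧ p.1 = q.1 := by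
  simp [joinStarClique]

theorem isClique_neighborSet_some (p : Fin (r - 1) × Fin k) :
    (joinStarClique r k).IsClique ((joinStarClique r k).neighborSet (some p)) := by
  rintro (_ | a) ha (_ | b) hb hab
  · exact absurd rfl hab
  · simp
  · simp
  · simp only [mem_neighborSet, adj_some_some] at ha hb
    exact adj_some_some.mpr ⟨fun h => hab (congrArg some h), ha.2.symm.trans hb.2⟩

theorem card_le_of_pairwise_not_adj {A : Finset (Option (Fin (r - 1) × Fin k))}
    (hnone : none ∉ A)
    (hA : ∀ a ∈ A, ∀ b ∈ A, a ≠ b → ¬ (joinStarClique r k).Adj a b) :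
    A.card ≤ r - 1 := by
  have hinj : Set.InjOn (Option.map Prod.fst) (A : Set (Option (Fin (r - 1) × Fin k))) := by
    rintro (_ | a) ha (_ | b) hb hab
    · rfl
    · exact absurd ha hnone
    · exact absurd hb hnone
    · by_contra hne
      exact hA _ ha _ hb hne
        (adj_some_some.mpr ⟨fun h => hne (congrArg some h), Option.some_injective _ hab⟩)
  calc A.card ≤ (univ.erase (none : Option (Fin (r - 1)))).card :=
        card_le_card_of_injOn _ (fun a ha => by cases a <;> simp_all) hinj
    _ = r - 1 := by simp

theorem k1rFree (hr : 3 ≤ r) : K1rFree (joinStarClique r k) r := by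
  rintro ⟨v, A, hvA, hA, hcard⟩
  cases v with
  | none =>
    have hnone : none ∉ A := fun h => (hvA none h).ne rfl
    have := card_le_of_pairwise_not_adj hnone hA
    omega
  | some p =>
    have : A.card ≤ 1 := card_le_one.mpr fun a ha b hb => by_contra fun hab =>
      hA a ha b hb hab (isClique_neighborSet_some p (hvA a ha) (hvA b hb) hab)
    omega

theorem not_colorable (hr : 2 ≤ r) : ¬ (joinStarClique r k).Colorable k := by
  intro hc
  obtain ⟨b⟩ : Nonempty (Fin (r - 1)) := ⟨⟨0, by omega⟩⟩
  have hclique : Pairwise fun i j : Option (Fin k) =>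
      (joinStarClique r k).Adj (i.map (b, ·)) (j.map (b, ·)) := by
    rintro (_ | i) (_ | j) hij <;> simp_all
  simpa using hc.card_le_of_pairwise_adj _ hclique

theorem colorable_induce_erase_none :
    ((joinStarClique r k).induce
      ((univ.erase none : Finset (Option (Fin (r - 1) × Fin k))) : Set _)).Colorable k := by
  refine ⟨Coloring.mk
    (fun x => (x.1.get (Option.isSome_iff_ne_none.mpr (by simpa using x.2))).2) ?_⟩
  rintro ⟨_ | p, hp⟩ ⟨_ | q, hq⟩ hpq
  · simp at hp
  · simp at hp
  · simp at hq
  · simp only [comap_adj, Function.Embedding.coe_subtype, adj_some_some] at hpq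
    simpa [Prod.ext_iff, hpq.2] using hpq.1

end joinStarClique

theorem stmt19_general (r k : ℕ) (hr : 3 ≤ r) :
    K1rFree (joinStarClique r k) r ∧
    domNum (joinStarClique r k) = 1 ∧
    alphaChrom (joinStarClique r k) k = (r - 1) * k * domNum (joinStarClique r k) := by
  have hdom : domNum (joinStarClique r k) = 1 :=
    domNum_eq_one_of_forall_adj _ none fun w hw => joinStarClique.adj_none_left.mpr hw
  refine ⟨joinStarClique.k1rFree hr, hdom, ?_⟩
  rw [hdom, mul_one, alphaChrom_eq_card_sub_one _ (joinStarClique.not_colorable (by omega)) none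
    joinStarClique.colorable_induce_erase_none]
  simp

/-- For r ≥ 3, k ≥ 1, the graph G = (r-1)K_k + K_1 is K_{1,r}-free, has
domination number 1, and its largest induced k-colorable subgraph has order
(r-1)k = (r-1)·k·γ(G), attaining the bound with equality. -/
theorem stmt19 (r k : ℕ) (hr : 3 ≤ r) (hk : 1 ≤ k) :
    K1rFree (joinStarClique r k) r ∧
    domNum (joinStarClique r k) = 1 ∧
    alphaChrom (joinStarClique r k) k = (r - 1) * k * domNum (joinStarClique r k) :=
  stmt19_general r k hr
end
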